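/- arXiv:2602.08819 — 3 statements merged into one kernel-verified Lean document; each statement's English description precedes it below -/
import Mathlib

section
/- Let τ_n → 0⁺ and μ_n → 1. Then for any β₀ > 0, −β₀[ψ((1−μ_n)τ_n) − ψ(τ_n)] → +∞. -/
open Real Filter Asymptotics MeasureTheory Set

/-- The digamma function `ψ(x) = d/dx log Γ(x)`. -/
noncomputable def digamma (x : ℝ) : ℝ := deriv (fun y : ℝ => Real.log (Real.Gamma y)) x

/-- The trigamma function `ψ₁ = ψ'`. -/
noncomputable def trigamma (x : ℝ) : ℝ := deriv digamma x

lemma diff_logGamma {x : ℝ} (hx : 0 < x) :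
    DifferentiableAt ℝ (fun y : ℝ => Real.log (Real.Gamma y)) x := by
  have hΓ : DifferentiableAt ℝ Real.Gamma x := by
    apply Real.differentiableAt_Gamma
    intro m
    have : (0:ℝ) ≤ m := Nat.cast_nonneg m
    nlinarith
  exact (Real.differentiableAt_log (Real.Gamma_pos_of_pos hx).ne').comp x hΓ

lemma digamma_mono : MonotoneOn digamma (Set.Ioi (0:ℝ)) := by
  have h := Real.convexOn_log_Gamma.monotoneOn_deriv
    (fun x hx => diff_logGamma (Set.mem_Ioi.mp hx))
  exact h

/-- The digamma recurrence `ψ(x) = ψ(x+1) - 1/x` for `x > 0`. -/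
lemma digamma_rec {x : ℝ} (hx : 0 < x) : digamma x = digamma (x + 1) - 1 / x := by
  have heq : (fun y : ℝ => Real.log (Real.Gamma y)) =ᶠ[nhds x]
      fun y : ℝ => Real.log (Real.Gamma (y + 1)) - Real.log y := by
    filter_upwards [eventually_gt_nhds hx] with y hy
    rw [Real.Gamma_add_one hy.ne', Real.log_mul hy.ne' (Real.Gamma_pos_of_pos hy).ne']
    ring
  have h1 : HasDerivAt (fun y : ℝ => Real.log (Real.Gamma (y + 1))) (digamma (x + 1) * 1) x := by
    exact HasDerivAt.comp x (diff_logGamma (by linarith)).hasDerivAt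
      ((hasDerivAt_id x).add_const 1)
  have h2 : HasDerivAt Real.log x⁻¹ x := Real.hasDerivAt_log hx.ne'
  have h3 : HasDerivAt (fun y : ℝ => Real.log (Real.Gamma (y + 1)) - Real.log y)
      (digamma (x + 1) * 1 - x⁻¹) x := h1.sub h2
  have : digamma x = digamma (x + 1) * 1 - x⁻¹ := by
    rw [digamma, heq.deriv_eq, h3.deriv]
  rw [this]
  field_simp

/-- Case A (`μ_n → 1`): if `τ_n → 0⁺` then for any `β₀ > 0`,
`−β₀[ψ((1−μ_n)τ_n) − ψ(τ_n)] → +∞`. -/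
theorem coercive_case_A_mu_one (β₀ : ℝ) (hβ₀ : 0 < β₀)
    (μ τ : ℕ → ℝ) (hμ : ∀ n, μ n ∈ Set.Ioo (0:ℝ) 1) (hτpos : ∀ n, 0 < τ n)
    (hμ1 : Filter.Tendsto μ Filter.atTop (nhds 1))
    (hτ0 : Filter.Tendsto τ Filter.atTop (nhds 0)) :
    Filter.Tendsto (fun n => -β₀ * (digamma ((1 - μ n) * τ n) - digamma (τ n)))
      Filter.atTop Filter.atTop := by
  set b : ℕ → ℝ := fun n => (1 - μ n) * τ n with hb
  have hbpos : ∀ n, 0 < b n := fun n =>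
    mul_pos (by linarith [(hμ n).2]) (hτpos n)
  have hb0 : Filter.Tendsto b Filter.atTop (nhds 0) := by
    have : Filter.Tendsto (fun n => (1 - μ n)) Filter.atTop (nhds 0) := by
      have := hμ1.const_sub 1
      simpa using this
    simpa using this.mul hτ0
  -- 1 / b n → ∞
  have hbinv : Filter.Tendsto (fun n => (b n)⁻¹) Filter.atTop Filter.atTop := by
    apply Filter.Tendsto.inv_tendsto_nhdsGT_zero
    rw [tendsto_nhdsWithin_iff]
    exact ⟨hb0, Filter.Eventually.of_forall fun n => hbpos n⟩
  set c : ℝ := β₀ * (digamma 1 - digamma 2) with hc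
  have hlim : Filter.Tendsto (fun n => β₀ / 2 * (b n)⁻¹ + c) Filter.atTop Filter.atTop := by
    apply Filter.tendsto_atTop_add_const_right
    exact hbinv.const_mul_atTop (by linarith)
  apply Filter.tendsto_atTop_mono' _ _ hlim
  -- eventually: μ n ≥ 1/2 and τ n ≤ 1
  have hμev : ∀ᶠ n in Filter.atTop, (1:ℝ)/2 ≤ μ n :=
    hμ1.eventually (eventually_ge_nhds (by norm_num))
  have hτev : ∀ᶠ n in Filter.atTop, τ n ≤ 1 :=
    hτ0.eventually (eventually_le_nhds (by norm_num))
  filter_upwards [hμev, hτev] with n hμn hτn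
  have hbn := hbpos n
  have hτ := hτpos n
  have hbτ : b n ≤ τ n := by
    have := (hμ n).1
    show (1 - μ n) * τ n ≤ τ n
    nlinarith
  -- rewrite using the recurrence
  rw [digamma_rec hbn, digamma_rec hτ]
  have hd1 : digamma 1 ≤ digamma (τ n + 1) :=
    digamma_mono (by norm_num) (by simp [Set.mem_Ioi]; linarith) (by linarith)
  have hd2 : digamma (b n + 1) ≤ digamma 2 :=
    digamma_mono (by simp [Set.mem_Ioi]; linarith) (by norm_num) (by linarith)
  -- 1/b - 1/τ = μ/b ≥ (1/2) * (1/b)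
  have hkey : 1 / b n - 1 / τ n = μ n / b n := by
    rw [hb]
    have h1μ : (1 - μ n) ≠ 0 := (by linarith [(hμ n).2] : (0:ℝ) < 1 - μ n).ne'
    field_simp
    ring
  have h5 : β₀ / 2 * (b n)⁻¹ ≤ β₀ * (1 / b n - 1 / τ n) := by
    rw [hkey]
    rw [div_eq_mul_inv (μ n)]
    have : (1:ℝ)/2 * (b n)⁻¹ ≤ μ n * (b n)⁻¹ := by
      apply mul_le_mul_of_nonneg_right hμn (by positivity)
    calc β₀ / 2 * (b n)⁻¹ = β₀ * ((1:ℝ)/2 * (b n)⁻¹) := by ring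
      _ ≤ β₀ * (μ n * (b n)⁻¹) := by nlinarith
  have h6 : c ≤ β₀ * (digamma (τ n + 1) - digamma (b n + 1)) := by
    rw [hc]
    have : digamma 1 - digamma 2 ≤ digamma (τ n + 1) - digamma (b n + 1) := by linarith
    nlinarith
  calc β₀ / 2 * (b n)⁻¹ + c
      ≤ β₀ * (1 / b n - 1 / τ n) + β₀ * (digamma (τ n + 1) - digamma (b n + 1)) := by linarith
    _ = -β₀ * (digamma (b n + 1) - 1 / b n - (digamma (τ n + 1) - 1 / τ n)) := by ring
end

section
/- Fix δ ∈ (0,1/2) and α₀, β₀ > 0. As τ → ∞, uniformly in μ ∈ [δ, 1−δ], the KL divergence D_KL(Beta(μτ, (1−μ)τ) || Beta(α₀, β₀)) = (1/2) log τ + O(1); in particular it tends to +∞. -/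
set_option maxHeartbeats 1000000


open Real Filter Asymptotics MeasureTheory Set

/-- Closed-form KL divergence between `Beta(a,b)` and `Beta(a₀,b₀)`. -/
noncomputable def betaKL (a b a0 b0 : ℝ) : ℝ :=
  Real.log (Real.Gamma (a + b) / (Real.Gamma a * Real.Gamma b)) -
    Real.log (Real.Gamma (a0 + b0) / (Real.Gamma a0 * Real.Gamma b0)) +
    (a - a0) * (digamma a - digamma (a + b)) +
    (b - b0) * (digamma b - digamma (a + b))

section Aux

private lemma gamma_ne_hyp {x : ℝ} (hx : 0 < x) : ∀ m : ℕ, x ≠ -(m : ℝ) :=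
  fun m => (((neg_nonpos.mpr (Nat.cast_nonneg m)).trans_lt hx)).ne'

private lemma gamma_diff {x : ℝ} (hx : 0 < x) :
    DifferentiableAt ℝ (Real.log ∘ Real.Gamma) x :=
  (Real.differentiableAt_Gamma (gamma_ne_hyp hx)).log (Real.Gamma_ne_zero (gamma_ne_hyp hx))

private lemma digamma_eq {x : ℝ} : digamma x = deriv (Real.log ∘ Real.Gamma) x := rfl

private lemma lg_rec {x : ℝ} (hx : 0 < x) :
    (Real.log ∘ Real.Gamma) (x + 1) = (Real.log ∘ Real.Gamma) x + Real.log x := by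
  simp only [Function.comp_apply, Real.Gamma_add_one hx.ne',
    Real.log_mul hx.ne' (Real.Gamma_pos_of_pos hx).ne', add_comm]

private lemma digamma_add_one {x : ℝ} (hx : 0 < x) :
    digamma (x + 1) = digamma x + 1 / x := by
  rw [digamma_eq, digamma_eq]
  rw [← deriv_comp_add_const, one_div, ← Real.deriv_log,
    ← deriv_add (gamma_diff hx) (Real.differentiableAt_log hx.ne')]
  apply Filter.EventuallyEq.deriv_eq
  filter_upwards [eventually_gt_nhds hx] with y hy
  exact lg_rec hy

private lemma digamma_le_log {x : ℝ} (hx : 0 < x) : digamma x ≤ Real.log x := by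
  have h := Real.convexOn_log_Gamma.deriv_le_slope (mem_Ioi.mpr hx)
    (mem_Ioi.mpr (by linarith : (0:ℝ) < x + 1)) (by linarith) (gamma_diff hx)
  rw [slope_def_field, lg_rec hx, add_sub_cancel_left, add_sub_cancel_left, div_one] at h
  exact digamma_eq ▸ h

private lemma log_le_digamma_succ {x : ℝ} (hx : 0 < x) : Real.log x ≤ digamma (x + 1) := by
  have h := Real.convexOn_log_Gamma.slope_le_deriv (mem_Ioi.mpr hx)
    (mem_Ioi.mpr (by linarith : (0:ℝ) < x + 1)) (by linarith) (gamma_diff (by linarith))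
  rw [slope_def_field, lg_rec hx, add_sub_cancel_left, add_sub_cancel_left, div_one] at h
  exact digamma_eq ▸ h

private lemma log_sub_le_digamma {x : ℝ} (hx : 0 < x) : Real.log x - 1 / x ≤ digamma x := by
  have h := log_le_digamma_succ hx
  rw [digamma_add_one hx] at h
  linarith

private lemma stirling_fac (n : ℕ) (hn : 1 ≤ n) :
    |Real.log (Nat.factorial n : ℝ) - (((n : ℝ) + 1 / 2) * Real.log n - n)| ≤ 2 := by
  have hn0 : (0:ℝ) < n := by exact_mod_cast hn
  obtain ⟨m, rfl⟩ : ∃ m, n = m + 1 := ⟨n - 1, by omega⟩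
  have hlow : Real.sqrt π ≤ Stirling.stirlingSeq (m + 1) :=
    Stirling.stirlingSeq'_antitone.le_of_tendsto
      (Stirling.tendsto_stirlingSeq_sqrt_pi.comp (tendsto_add_atTop_nat 1)) m
  have hhigh : Stirling.stirlingSeq (m + 1) ≤ Real.exp 1 / Real.sqrt 2 := by
    simpa using Stirling.stirlingSeq'_antitone (Nat.zero_le m)
  have hs1 : (1:ℝ) ≤ Real.sqrt π := by
    rw [show (1:ℝ) = Real.sqrt 1 by simp]
    exact Real.sqrt_le_sqrt (by linarith [Real.pi_gt_three])
  have hpos : 0 < Stirling.stirlingSeq (m + 1) := Stirling.stirlingSeq'_pos m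
  have h1 : 0 ≤ Real.log (Stirling.stirlingSeq (m + 1)) :=
    Real.log_nonneg (hs1.trans hlow)
  have h2 : Real.log (Stirling.stirlingSeq (m + 1)) ≤ 1 := by
    rw [← Real.log_exp 1]
    apply Real.log_le_log (by positivity)
    refine hhigh.trans (div_le_self (Real.exp_pos 1).le ?_)
    rw [show (1:ℝ) = Real.sqrt 1 by simp]
    exact Real.sqrt_le_sqrt (by norm_num)
  have hform := Stirling.log_stirlingSeq_formula (m + 1)
  have e1 : Real.log (2 * ((m:ℝ) + 1)) = Real.log 2 + Real.log ((m:ℝ) + 1) :=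
    Real.log_mul two_ne_zero (by positivity)
  have e2 : Real.log (((m:ℝ) + 1) / Real.exp 1) = Real.log ((m:ℝ) + 1) - 1 := by
    rw [Real.log_div (by positivity) (Real.exp_ne_zero 1), Real.log_exp]
  have key : Real.log (Nat.factorial (m+1) : ℝ) - ((((m:ℕ):ℝ) + 1 + 1 / 2) * Real.log ((m:ℝ) + 1) - ((m:ℝ) + 1))
      = Real.log (Stirling.stirlingSeq (m + 1)) + 1 / 2 * Real.log 2 := by
    push_cast at hform ⊢
    linear_combination -hform + 1 / 2 * e1 + ((m:ℝ) + 1) * e2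
  have hl2 : (0:ℝ) ≤ Real.log 2 := Real.log_nonneg one_le_two
  have hl2' : Real.log 2 ≤ 1 := by linarith [Real.log_le_sub_one_of_pos (by norm_num : (0:ℝ) < 2)]
  rw [abs_le]
  push_cast
  push_cast at key
  constructor <;> linarith

private lemma logGamma_bound {x : ℝ} (hx : 1 ≤ x) :
    |Real.log (Real.Gamma x) - ((x - 1 / 2) * Real.log x - x)| ≤ 4 := by
  have hx0 : 0 < x := by linarith
  set n : ℕ := ⌊x⌋₊ with hndef
  have hn1 : 1 ≤ n := Nat.le_floor (by exact_mod_cast hx)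
  have hn0 : (1:ℝ) ≤ (n:ℝ) := by exact_mod_cast hn1
  have hnx : (n:ℝ) ≤ x := Nat.floor_le hx0.le
  have hxn : x < (n:ℝ) + 1 := Nat.lt_floor_add_one x
  have hnpos : (0:ℝ) < n := by linarith
  have hfac := stirling_fac n hn1
  obtain ⟨hfac1, hfac2⟩ := abs_le.1 hfac
  have hGn1 : (Real.log ∘ Real.Gamma) ((n:ℝ) + 1) = Real.log (Nat.factorial n : ℝ) := by
    simp [Function.comp_apply, Real.Gamma_nat_eq_factorial]
  have hrec : (Real.log ∘ Real.Gamma) ((n:ℝ) + 1) = (Real.log ∘ Real.Gamma) n + Real.log n :=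
    lg_rec hnpos
  -- upper bound via convexity (interpolation between n and n+1)
  have hub : (Real.log ∘ Real.Gamma) x ≤ Real.log (Nat.factorial n : ℝ) - ((n:ℝ) + 1 - x) * Real.log n := by
    have hcvx := Real.convexOn_log_Gamma.2 (mem_Ioi.mpr hnpos)
      (mem_Ioi.mpr (by linarith : (0:ℝ) < (n:ℝ) + 1))
      (by linarith : (0:ℝ) ≤ (n:ℝ) + 1 - x) (by linarith : (0:ℝ) ≤ x - (n:ℝ))
      (by ring)
    have harg : ((n:ℝ) + 1 - x) • (n:ℝ) + (x - (n:ℝ)) • ((n:ℝ) + 1) = x := by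
      simp only [smul_eq_mul]; ring
    rw [harg] at hcvx
    simp only [smul_eq_mul] at hcvx
    have hGn : (Real.log ∘ Real.Gamma) (n:ℝ) = Real.log (Nat.factorial n : ℝ) - Real.log n := by
      rw [← hGn1, hrec]; ring
    calc (Real.log ∘ Real.Gamma) x
        ≤ ((n:ℝ) + 1 - x) * (Real.log ∘ Real.Gamma) (n:ℝ)
            + (x - (n:ℝ)) * (Real.log ∘ Real.Gamma) ((n:ℝ) + 1) := hcvx
      _ = Real.log (Nat.factorial n : ℝ) - ((n:ℝ) + 1 - x) * Real.log n := by
          rw [hGn, hGn1]; ring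
  -- lower bound via slope at right endpoint n+1
  have hlb : Real.log (Nat.factorial n : ℝ) - ((n:ℝ) + 1 - x) * Real.log ((n:ℝ) + 1)
      ≤ (Real.log ∘ Real.Gamma) x := by
    have hs := Real.convexOn_log_Gamma.slope_le_deriv (mem_Ioi.mpr hx0)
      (mem_Ioi.mpr (by linarith : (0:ℝ) < (n:ℝ) + 1)) hxn (gamma_diff (by linarith))
    rw [slope_def_field] at hs
    have hdig : deriv (Real.log ∘ Real.Gamma) ((n:ℝ) + 1) ≤ Real.log ((n:ℝ) + 1) := by
      rw [← digamma_eq]; exact digamma_le_log (by linarith)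
    have h' : ((Real.log ∘ Real.Gamma) ((n:ℝ) + 1) - (Real.log ∘ Real.Gamma) x)
        ≤ ((n:ℝ) + 1 - x) * Real.log ((n:ℝ) + 1) := by
      have := hs.trans hdig
      rw [div_le_iff₀ (by linarith : (0:ℝ) < (n:ℝ) + 1 - x)] at this
      linarith [this]
    rw [hGn1] at h'
    linarith
  -- elementary log estimates
  have hfx : (Real.log ∘ Real.Gamma) x = Real.log (Real.Gamma x) := rfl
  rw [hfx] at hub hlb
  have hlog_mono1 : Real.log n ≤ Real.log x := Real.log_le_log hnpos hnx
  have hlog_mono2 : Real.log x ≤ Real.log ((n:ℝ) + 1) :=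
    Real.log_le_log hx0 hxn.le
  have hmono : Real.log n ≤ Real.log ((n:ℝ) + 1) := hlog_mono1.trans hlog_mono2
  have hlogn1 : (n:ℝ) * (Real.log ((n:ℝ) + 1) - Real.log n) ≤ 1 := by
    have h := Real.log_le_sub_one_of_pos (show (0:ℝ) < ((n:ℝ) + 1) / n by positivity)
    rw [Real.log_div (by positivity) (by positivity)] at h
    have heq : ((n:ℝ) + 1) / n - 1 = 1 / n := by field_simp; ring
    have hd : Real.log ((n:ℝ) + 1) - Real.log n ≤ 1 / n := by rw [← heq]; exact h
    calc (n:ℝ) * (Real.log ((n:ℝ) + 1) - Real.log n) ≤ (n:ℝ) * (1 / n) :=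
          mul_le_mul_of_nonneg_left hd hnpos.le
      _ = 1 := by field_simp
  have h3 : 0 ≤ ((n:ℝ) - 1) * (Real.log ((n:ℝ) + 1) - Real.log n) :=
    mul_nonneg (by linarith) (by linarith)
  have hxhalf : (0:ℝ) ≤ x - 1 / 2 := by linarith
  rw [abs_le]
  constructor
  · -- lower: (x - 1/2) log x - x - log Γ x ≤ 4
    have t1 : (x - 1/2) * Real.log x ≤ (x - 1/2) * Real.log ((n:ℝ) + 1) :=
      mul_le_mul_of_nonneg_left hlog_mono2 hxhalf
    linarith [t1, hlb, hfac1, hlogn1, h3, hnx]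
  · -- upper: log Γ x - ((x-1/2) log x - x) ≤ 4
    have t1 : (x - 1/2) * Real.log n ≤ (x - 1/2) * Real.log x :=
      mul_le_mul_of_nonneg_left hlog_mono1 hxhalf
    linarith [t1, hub, hfac2, hxn.le]

end Aux

/-- Case B1: uniformly on `μ ∈ [δ, 1−δ]`, as `τ → ∞`,
`D_KL(Beta(μτ,(1−μ)τ) ‖ Beta(α₀,β₀)) = (1/2) log τ + O(1)`; in particular it
tends to `+∞`. -/
theorem betaKL_case_B1 (δ α₀ β₀ : ℝ) (hδ : δ ∈ Set.Ioo (0:ℝ) (1/2))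
    (hα₀ : 0 < α₀) (hβ₀ : 0 < β₀) :
    (∃ T₀ C : ℝ, 0 < C ∧ ∀ τ ≥ T₀, ∀ μ ∈ Set.Icc δ (1 - δ),
      |betaKL (μ * τ) ((1 - μ) * τ) α₀ β₀ - (1 / 2) * Real.log τ| ≤ C) ∧
    ∀ (μ τ : ℕ → ℝ), (∀ n, μ n ∈ Set.Icc δ (1 - δ)) →
      Filter.Tendsto τ Filter.atTop Filter.atTop →
      Filter.Tendsto (fun n => betaKL (μ n * τ n) ((1 - μ n) * τ n) α₀ β₀)
        Filter.atTop Filter.atTop := by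
  obtain ⟨hδ0, hδ2⟩ := hδ
  set K0 := Real.log (Real.Gamma (α₀ + β₀) / (Real.Gamma α₀ * Real.Gamma β₀)) with hK0def
  have hmain : ∀ τ ≥ (α₀ + β₀ + 2) / δ, ∀ μ ∈ Set.Icc δ (1 - δ),
      |betaKL (μ * τ) ((1 - μ) * τ) α₀ β₀ - (1 / 2) * Real.log τ| ≤
        15 + |K0| + (1 + α₀ + β₀) * (1 + |Real.log δ|) := by
    intro τ hτ μ hμ
    obtain ⟨hμ1, hμ2⟩ := hμ
    have hμpos : 0 < μ := lt_of_lt_of_le hδ0 hμ1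
    have hνδ : δ ≤ 1 - μ := by linarith
    have hνpos : 0 < 1 - μ := lt_of_lt_of_le hδ0 hνδ
    have hμ1' : μ ≤ 1 := by linarith
    have hδτ : α₀ + β₀ + 2 ≤ τ * δ := by
      rw [ge_iff_le, div_le_iff₀ hδ0] at hτ; exact hτ
    have hτpos : 0 < τ := by
      rcases lt_or_ge 0 τ with h | h
      · exact h
      · exfalso; linarith [mul_nonpos_of_nonpos_of_nonneg h hδ0.le]
    have hτ1 : 1 ≤ τ := by
      linarith [mul_le_mul_of_nonneg_left hδ2.le hτpos.le, hδτ]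
    have ha2 : α₀ + β₀ + 2 ≤ μ * τ := by
      linarith [mul_le_mul_of_nonneg_right hμ1 hτpos.le, hδτ]
    have hb2 : α₀ + β₀ + 2 ≤ (1 - μ) * τ := by
      linarith [mul_le_mul_of_nonneg_right hνδ hτpos.le, hδτ]
    have ha1 : 1 ≤ μ * τ := by linarith
    have hb1 : 1 ≤ (1 - μ) * τ := by linarith
    have hapos : 0 < μ * τ := by linarith
    have hbpos : 0 < (1 - μ) * τ := by linarith
    have hab : μ * τ + (1 - μ) * τ = τ := by ring
    -- log splits
    have hla : Real.log (μ * τ) = Real.log μ + Real.log τ := Real.log_mul hμpos.ne' hτpos.ne'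
    have hlb : Real.log ((1 - μ) * τ) = Real.log (1 - μ) + Real.log τ :=
      Real.log_mul hνpos.ne' hτpos.ne'
    -- log of Gamma quotient
    have hGapos := Real.Gamma_pos_of_pos hapos
    have hGbpos := Real.Gamma_pos_of_pos hbpos
    have hGtpos := Real.Gamma_pos_of_pos hτpos
    have hld : Real.log (Real.Gamma τ / (Real.Gamma (μ * τ) * Real.Gamma ((1 - μ) * τ)))
        = Real.log (Real.Gamma τ) - Real.log (Real.Gamma (μ * τ))
          - Real.log (Real.Gamma ((1 - μ) * τ)) := by
      rw [Real.log_div hGtpos.ne' (by positivity), Real.log_mul hGapos.ne' hGbpos.ne']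
      ring
    -- Stirling errors
    obtain ⟨hE1a, hE1b⟩ := abs_le.1 (logGamma_bound hτ1)
    obtain ⟨hE2a, hE2b⟩ := abs_le.1 (logGamma_bound ha1)
    obtain ⟨hE3a, hE3b⟩ := abs_le.1 (logGamma_bound hb1)
    -- digamma errors
    have hda1 : digamma (μ * τ) ≤ Real.log (μ * τ) := digamma_le_log hapos
    have hda2 : Real.log (μ * τ) - 1 / (μ * τ) ≤ digamma (μ * τ) := log_sub_le_digamma hapos
    have hdb1 : digamma ((1 - μ) * τ) ≤ Real.log ((1 - μ) * τ) := digamma_le_log hbpos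
    have hdb2 : Real.log ((1 - μ) * τ) - 1 / ((1 - μ) * τ) ≤ digamma ((1 - μ) * τ) :=
      log_sub_le_digamma hbpos
    have hdt1 : digamma τ ≤ Real.log τ := digamma_le_log hτpos
    have hdt2 : Real.log τ - 1 / τ ≤ digamma τ := log_sub_le_digamma hτpos
    -- key algebraic identity
    have key : betaKL (μ * τ) ((1 - μ) * τ) α₀ β₀ - 1 / 2 * Real.log τ =
        (Real.log (Real.Gamma τ) - ((τ - 1 / 2) * Real.log τ - τ))
        - (Real.log (Real.Gamma (μ * τ)) - ((μ * τ - 1 / 2) * Real.log (μ * τ) - μ * τ))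
        - (Real.log (Real.Gamma ((1 - μ) * τ)) -
            (((1 - μ) * τ - 1 / 2) * Real.log ((1 - μ) * τ) - (1 - μ) * τ))
        - K0 + (1 / 2) * (Real.log μ + Real.log (1 - μ))
        - α₀ * Real.log μ - β₀ * Real.log (1 - μ)
        + (μ * τ - α₀) * ((digamma (μ * τ) - Real.log (μ * τ)) - (digamma τ - Real.log τ))
        + ((1 - μ) * τ - β₀) *
            ((digamma ((1 - μ) * τ) - Real.log ((1 - μ) * τ)) - (digamma τ - Real.log τ)) := by
      simp only [betaKL, hab, hld, ← hK0def]
      linear_combination (-(μ * τ - 1 / 2) + (μ * τ - α₀)) * hla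
        + (-((1 - μ) * τ - 1 / 2) + ((1 - μ) * τ - β₀)) * hlb
    -- bounds on the product terms
    have hcoefa : 0 ≤ μ * τ - α₀ := by linarith
    have hcoefb : 0 ≤ (1 - μ) * τ - β₀ := by linarith
    have hP1 : (μ * τ - α₀) * ((digamma (μ * τ) - Real.log (μ * τ)) - (digamma τ - Real.log τ))
        ≤ 1 := by
      have h1 : (digamma (μ * τ) - Real.log (μ * τ)) - (digamma τ - Real.log τ) ≤ 1 / τ := by
        linarith
      calc (μ * τ - α₀) * ((digamma (μ * τ) - Real.log (μ * τ)) - (digamma τ - Real.log τ))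
          ≤ (μ * τ - α₀) * (1 / τ) := mul_le_mul_of_nonneg_left h1 hcoefa
        _ ≤ τ * (1 / τ) := by
            apply mul_le_mul_of_nonneg_right _ (by positivity)
            linarith [mul_le_mul_of_nonneg_right hμ1' hτpos.le]
        _ = 1 := by field_simp
    have hP1' : -1 ≤ (μ * τ - α₀) *
        ((digamma (μ * τ) - Real.log (μ * τ)) - (digamma τ - Real.log τ)) := by
      have h1 : -(1 / (μ * τ)) ≤
          (digamma (μ * τ) - Real.log (μ * τ)) - (digamma τ - Real.log τ) := by linarith
      have h2 : (μ * τ - α₀) * (-(1 / (μ * τ))) ≤ (μ * τ - α₀) *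
          ((digamma (μ * τ) - Real.log (μ * τ)) - (digamma τ - Real.log τ)) :=
        mul_le_mul_of_nonneg_left h1 hcoefa
      have h3 : (μ * τ) * (-(1 / (μ * τ))) ≤ (μ * τ - α₀) * (-(1 / (μ * τ))) := by
        apply mul_le_mul_of_nonpos_right (by linarith)
        simp only [neg_nonpos]
        positivity
      have h4 : (μ * τ) * (-(1 / (μ * τ))) = -1 := by field_simp
      linarith
    have hP2 : ((1 - μ) * τ - β₀) *
        ((digamma ((1 - μ) * τ) - Real.log ((1 - μ) * τ)) - (digamma τ - Real.log τ)) ≤ 1 := by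
      have h1 : (digamma ((1 - μ) * τ) - Real.log ((1 - μ) * τ)) - (digamma τ - Real.log τ)
          ≤ 1 / τ := by linarith
      calc ((1 - μ) * τ - β₀) *
            ((digamma ((1 - μ) * τ) - Real.log ((1 - μ) * τ)) - (digamma τ - Real.log τ))
          ≤ ((1 - μ) * τ - β₀) * (1 / τ) := mul_le_mul_of_nonneg_left h1 hcoefb
        _ ≤ τ * (1 / τ) := by
            apply mul_le_mul_of_nonneg_right _ (by positivity)
            linarith [mul_le_mul_of_nonneg_right (show (1:ℝ) - μ ≤ 1 by linarith) hτpos.le]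
        _ = 1 := by field_simp
    have hP2' : -1 ≤ ((1 - μ) * τ - β₀) *
        ((digamma ((1 - μ) * τ) - Real.log ((1 - μ) * τ)) - (digamma τ - Real.log τ)) := by
      have h1 : -(1 / ((1 - μ) * τ)) ≤
          (digamma ((1 - μ) * τ) - Real.log ((1 - μ) * τ)) - (digamma τ - Real.log τ) := by
        linarith
      have h2 : ((1 - μ) * τ - β₀) * (-(1 / ((1 - μ) * τ))) ≤ ((1 - μ) * τ - β₀) *
          ((digamma ((1 - μ) * τ) - Real.log ((1 - μ) * τ)) - (digamma τ - Real.log τ)) :=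
        mul_le_mul_of_nonneg_left h1 hcoefb
      have h3 : ((1 - μ) * τ) * (-(1 / ((1 - μ) * τ))) ≤ ((1 - μ) * τ - β₀) *
          (-(1 / ((1 - μ) * τ))) := by
        apply mul_le_mul_of_nonpos_right (by linarith)
        simp only [neg_nonpos]
        positivity
      have h4 : ((1 - μ) * τ) * (-(1 / ((1 - μ) * τ))) = -1 := by field_simp
      linarith
    -- log bounds
    have hlμ1 : Real.log δ ≤ Real.log μ := Real.log_le_log hδ0 hμ1
    have hlμ2 : Real.log μ ≤ 0 := Real.log_nonpos hμpos.le hμ1'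
    have hlν1 : Real.log δ ≤ Real.log (1 - μ) := Real.log_le_log hδ0 hνδ
    have hlν2 : Real.log (1 - μ) ≤ 0 := Real.log_nonpos hνpos.le (by linarith)
    have hldelta : |Real.log δ| = -Real.log δ :=
      abs_of_neg (Real.log_neg hδ0 (by linarith))
    have hα1 : α₀ * Real.log δ ≤ α₀ * Real.log μ := mul_le_mul_of_nonneg_left hlμ1 hα₀.le
    have hα2 : α₀ * Real.log μ ≤ 0 := mul_nonpos_of_nonneg_of_nonpos hα₀.le hlμ2
    have hβ1 : β₀ * Real.log δ ≤ β₀ * Real.log (1 - μ) := mul_le_mul_of_nonneg_left hlν1 hβ₀.le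
    have hβ2 : β₀ * Real.log (1 - μ) ≤ 0 := mul_nonpos_of_nonneg_of_nonpos hβ₀.le hlν2
    have hK0a : -|K0| ≤ K0 := neg_abs_le K0
    have hK0b : K0 ≤ |K0| := le_abs_self K0
    have hCexp : (1 + α₀ + β₀) * (1 + |Real.log δ|) =
        1 + |Real.log δ| + α₀ + β₀ + α₀ * |Real.log δ| + β₀ * |Real.log δ| := by ring
    have hαd : α₀ * |Real.log δ| = -(α₀ * Real.log δ) := by rw [hldelta]; ring
    have hβd : β₀ * |Real.log δ| = -(β₀ * Real.log δ) := by rw [hldelta]; ring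
    have h0 : 0 ≤ |Real.log δ| := abs_nonneg _
    have hα0d : 0 ≤ α₀ * |Real.log δ| := mul_nonneg hα₀.le h0
    have hβ0d : 0 ≤ β₀ * |Real.log δ| := mul_nonneg hβ₀.le h0
    rw [abs_le]
    constructor
    · rw [key]
      linarith [hE1a, hE2b, hE3b, hK0b, hlμ1, hlν1, hα2, hβ2, hP1', hP2', hCexp, hαd, hβd,
        h0, hα0d, hβ0d, hα₀.le, hβ₀.le, hldelta.le, hldelta.ge]
    · rw [key]
      linarith [hE1b, hE2a, hE3a, hK0a, hlμ2, hlν2, hα1, hβ1, hP1, hP2, hCexp, hαd, hβd,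
        h0, hα0d, hβ0d, hα₀.le, hβ₀.le, hldelta.le, hldelta.ge]
  have hCpos : 0 < 15 + |K0| + (1 + α₀ + β₀) * (1 + |Real.log δ|) := by positivity
  refine ⟨⟨(α₀ + β₀ + 2) / δ, 15 + |K0| + (1 + α₀ + β₀) * (1 + |Real.log δ|), hCpos, hmain⟩, ?_⟩
  intro μ τ hμ hτ
  apply tendsto_atTop_mono' atTop
    (show ∀ᶠ n in atTop,
      1 / 2 * Real.log (τ n) - (15 + |K0| + (1 + α₀ + β₀) * (1 + |Real.log δ|)) ≤
        betaKL (μ n * τ n) ((1 - μ n) * τ n) α₀ β₀ from ?_)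
  · have h1 : Tendsto (fun n => Real.log (τ n)) atTop atTop :=
      Real.tendsto_log_atTop.comp hτ
    have h2 : Tendsto (fun n => 1 / 2 * Real.log (τ n)) atTop atTop :=
      h1.const_mul_atTop (by norm_num : (0:ℝ) < 1 / 2)
    simpa [sub_eq_add_neg] using tendsto_atTop_add_const_right atTop
      (-(15 + |K0| + (1 + α₀ + β₀) * (1 + |Real.log δ|))) h2
  · filter_upwards [hτ.eventually_ge_atTop ((α₀ + β₀ + 2) / δ)] with n hn
    have := hmain (τ n) hn (μ n) (hμ n)
    have h' := (abs_le.1 this).1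
    linarith
end

section
/- Let μ = σ(Δu) where σ is the logistic function and ε = 1 − μ, with fixed τ ∈ (0,∞), λ > 0, β₀ > 0. Then, with α = μτ, β = (1−μ)τ, the quantity τ[(α − α₀)ψ₁(α) − (β − β₀)ψ₁(β)] equals β₀/(τε²) − 1/ε + O(1) as ε → 0⁺, and multiplying by dμ/dΔu = μ(1−μ) = ε − ε², the leading contribution of the gradient of the ICRM loss along Δu is λβ₀/(τε)·(1 + o(1)). -/
open Real Filter Asymptotics MeasureTheory Set

lemma analyticAt_logGamma {x : ℝ} (hx : 0 < x) :
    AnalyticAt ℝ (fun y : ℝ => Real.log (Real.Gamma y)) x := by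
  have hG : AnalyticAt ℂ Complex.Gamma (x : ℂ) := by
    rw [Complex.analyticAt_iff_eventually_differentiableAt]
    have hopen : IsOpen {z : ℂ | 0 < z.re} := isOpen_lt continuous_const Complex.continuous_re
    have hmem : (x : ℂ) ∈ {z : ℂ | 0 < z.re} := by simpa using hx
    filter_upwards [hopen.eventually_mem hmem] with z hz
    refine Complex.differentiableAt_Gamma z fun m h => ?_
    rw [h] at hz
    simp only [Set.mem_setOf_eq, Complex.neg_re, Complex.natCast_re] at hz
    have : (0:ℝ) ≤ (m:ℝ) := Nat.cast_nonneg m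
    linarith
  have hC : AnalyticAt ℂ (fun z : ℂ => Complex.log (Complex.Gamma z)) (x : ℂ) := by
    refine hG.clog ?_
    rw [Complex.Gamma_ofReal]
    exact Complex.ofReal_mem_slitPlane.2 (Real.Gamma_pos_of_pos hx)
  have h1 : AnalyticAt ℝ (fun y : ℝ => (Complex.log (Complex.Gamma (y : ℂ))).re) x :=
    (Complex.reCLM.analyticAt _).comp (hC.restrictScalars.comp (Complex.ofRealCLM.analyticAt x))
  refine h1.congr ?_
  filter_upwards [isOpen_Ioi.eventually_mem hx] with y hy
  rw [Complex.Gamma_ofReal, ← Complex.ofReal_log (Real.Gamma_pos_of_pos hy).le,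
    Complex.ofReal_re]

lemma analyticOnNhd_digamma : AnalyticOnNhd ℝ digamma (Ioi 0) := by
  have h : AnalyticOnNhd ℝ (fun y : ℝ => Real.log (Real.Gamma y)) (Ioi 0) :=
    fun x hx => analyticAt_logGamma hx
  exact h.deriv

lemma analyticOnNhd_trigamma : AnalyticOnNhd ℝ trigamma (Ioi 0) :=
  analyticOnNhd_digamma.deriv

lemma trigamma_rec {x : ℝ} (hx : 0 < x) : trigamma x = trigamma (x + 1) + 1 / x ^ 2 := by
  have hev : digamma =ᶠ[nhds x] (fun y : ℝ => digamma (y + 1) - 1 / y) := by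
    filter_upwards [isOpen_Ioi.eventually_mem hx] with y hy
    exact digamma_rec hy
  have hd1 : DifferentiableAt ℝ (fun y : ℝ => digamma (y + 1)) x :=
    (differentiableAt_comp_add_const (f := digamma) (a := x) (b := 1)).2
      ((analyticOnNhd_digamma (x + 1) (by simp only [Set.mem_Ioi]; linarith)).differentiableAt)
  have hd2 : DifferentiableAt ℝ (fun y : ℝ => 1 / y) x := by
    simp only [one_div]
    exact differentiableAt_inv hx.ne'
  have hder : deriv (fun y : ℝ => digamma (y + 1)) x = trigamma (x + 1) :=
    deriv_comp_add_const digamma 1 x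
  have hinv : deriv (fun y : ℝ => 1 / y) x = -(x ^ 2)⁻¹ := by
    simp only [one_div]; exact deriv_inv
  rw [trigamma, hev.deriv_eq, deriv_fun_sub hd1 hd2, hder, hinv, one_div]
  ring

/-- Edge behaviour (Lemma 7.1): with `μ = 1 − ε`, `α = μτ`, `β = ετ`, as `ε → 0⁺`,
`τ[(α − α₀)ψ₁(α) − (β − β₀)ψ₁(β)] = β₀/(τε²) − 1/ε + O(1)`, and after multiplying
by `dμ/dΔu = μ(1−μ) = ε − ε²` and `λ`, the gradient contribution along `Δu`
is `λβ₀/(τε)·(1 + o(1))`. -/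
theorem icrm_edge_behavior (τ lam α₀ β₀ : ℝ)
    (hτ : 0 < τ) (hlam : 0 < lam) (hα₀ : 0 < α₀) (hβ₀ : 0 < β₀) :
    (fun ε : ℝ =>
        τ * (((1 - ε) * τ - α₀) * trigamma ((1 - ε) * τ) -
              (ε * τ - β₀) * trigamma (ε * τ)) -
          (β₀ / (τ * ε ^ 2) - 1 / ε))
      =O[nhdsWithin 0 (Set.Ioi 0)] (fun _ : ℝ => (1:ℝ)) ∧
    Filter.Tendsto (fun ε : ℝ =>
        (lam * ((ε - ε ^ 2) *
          (τ * (((1 - ε) * τ - α₀) * trigamma ((1 - ε) * τ) -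
                 (ε * τ - β₀) * trigamma (ε * τ))))) /
          (lam * β₀ / (τ * ε)))
      (nhdsWithin 0 (Set.Ioi 0)) (nhds 1) := by
  set R : ℝ → ℝ := fun ε =>
    τ * (((1 - ε) * τ - α₀) * trigamma ((1 - ε) * τ) - (ε * τ - β₀) * trigamma (ε * τ + 1))
    with hRdef
  -- continuity of R at 0 (from the right)
  have hT1 : Tendsto (fun ε : ℝ => trigamma ((1 - ε) * τ)) (nhds 0) (nhds (trigamma τ)) := by
    have h0 : ContinuousAt trigamma τ := (analyticOnNhd_trigamma τ (Set.mem_Ioi.2 hτ)).continuousAt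
    have hc : Continuous fun ε : ℝ => (1 - ε) * τ := by fun_prop
    have hin : Tendsto (fun ε : ℝ => (1 - ε) * τ) (nhds 0) (nhds τ) := by
      simpa using hc.tendsto 0
    exact h0.tendsto.comp hin
  have hT2 : Tendsto (fun ε : ℝ => trigamma (ε * τ + 1)) (nhds 0) (nhds (trigamma 1)) := by
    have h0 : ContinuousAt trigamma 1 := (analyticOnNhd_trigamma 1 (Set.mem_Ioi.2 one_pos)).continuousAt
    have hc : Continuous fun ε : ℝ => ε * τ + 1 := by fun_prop
    have hin : Tendsto (fun ε : ℝ => ε * τ + 1) (nhds 0) (nhds 1) := by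
      simpa using hc.tendsto 0
    exact h0.tendsto.comp hin
  set L : ℝ := τ * ((τ - α₀) * trigamma τ - (0 - β₀) * trigamma 1) with hLdef
  have hRt0 : Tendsto R (nhds 0) (nhds L) := by
    have hA : Tendsto (fun ε : ℝ => (1 - ε) * τ - α₀) (nhds 0) (nhds (τ - α₀)) := by
      have hc : Continuous fun ε : ℝ => (1 - ε) * τ - α₀ := by fun_prop
      simpa using hc.tendsto 0
    have hB : Tendsto (fun ε : ℝ => ε * τ - β₀) (nhds 0) (nhds (0 - β₀)) := by
      have hc : Continuous fun ε : ℝ => ε * τ - β₀ := by fun_prop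
      simpa using hc.tendsto 0
    exact tendsto_const_nhds.mul ((hA.mul hT1).sub (hB.mul hT2))
  have hRt : Tendsto R (nhdsWithin 0 (Set.Ioi 0)) (nhds L) :=
    hRt0.mono_left nhdsWithin_le_nhds
  -- key eventual rewriting using trigamma recurrence
  have hkey : ∀ ε : ℝ, ε ∈ Set.Ioi (0:ℝ) →
      τ * (((1 - ε) * τ - α₀) * trigamma ((1 - ε) * τ) -
            (ε * τ - β₀) * trigamma (ε * τ)) -
        (β₀ / (τ * ε ^ 2) - 1 / ε) = R ε := by
    intro ε hε
    rw [Set.mem_Ioi] at hε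
    have hετ : 0 < ε * τ := mul_pos hε hτ
    rw [trigamma_rec hετ, hRdef]
    field_simp
    ring
  constructor
  · have hO : R =O[nhdsWithin 0 (Set.Ioi 0)] (fun _ : ℝ => (1:ℝ)) := hRt.isBigO_one ℝ
    refine hO.congr' ?_ EventuallyEq.rfl
    filter_upwards [self_mem_nhdsWithin] with ε hε
    exact (hkey ε hε).symm
  · have hg : Tendsto (fun ε : ℝ => (1 - ε) * (1 - τ * ε / β₀ + τ * ε ^ 2 * R ε / β₀))
        (nhdsWithin 0 (Set.Ioi 0)) (nhds 1) := by
      have h1 : Tendsto (fun ε : ℝ => ε) (nhdsWithin 0 (Set.Ioi 0)) (nhds 0) :=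
        tendsto_id.mono_left nhdsWithin_le_nhds
      have hg0 : Tendsto (fun ε : ℝ => (1 - ε) * (1 - τ * ε / β₀ + τ * ε ^ 2 * R ε / β₀))
          (nhdsWithin 0 (Set.Ioi 0))
          (nhds ((1 - 0) * (1 - τ * 0 / β₀ + τ * 0 ^ 2 * L / β₀))) :=
        ((tendsto_const_nhds.sub h1).mul
          ((tendsto_const_nhds.sub (((tendsto_const_nhds.mul h1).div_const β₀))).add
            ((((tendsto_const_nhds.mul (h1.pow 2)).mul hRt).div_const β₀))))
      have : ((1:ℝ) - 0) * (1 - τ * 0 / β₀ + τ * 0 ^ 2 * L / β₀) = 1 := by norm_num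
      rwa [this] at hg0
    refine Tendsto.congr' ?_ hg
    filter_upwards [self_mem_nhdsWithin] with ε hε
    rw [Set.mem_Ioi] at hε
    have hE : τ * (((1 - ε) * τ - α₀) * trigamma ((1 - ε) * τ) -
        (ε * τ - β₀) * trigamma (ε * τ)) = β₀ / (τ * ε ^ 2) - 1 / ε + R ε := by
      have := hkey ε hε
      linarith
    rw [hE]
    field_simp
end
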